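/- arXiv:2307.03330 — 3 statements merged into one kernel-verified Lean document; each statement's English description precedes it below -/
import Mathlib

section
/- Let A, P be n×n real matrices with P symmetric positive definite, ξ < 0, ε > 0. The block matrix [[AᵀP + PA + εP, P + ξI],[P + ξI, 0]] is negative semidefinite if and only if P = -ξI and Aᵀ + A + εI is negative semidefinite. -/
open Matrix

theorem block_nsd_iff (n : ℕ) (hn : 0 < n)
    (A P : Matrix (Fin n) (Fin n) ℝ) (hP : P.PosDef)
    (ξ ε : ℝ) (hξ : ξ < 0) (hε : 0 < ε) :
    (∀ v : (Fin n ⊕ Fin n) → ℝ,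
      v ⬝ᵥ (Matrix.fromBlocks (Aᵀ * P + P * A + ε • P) (P + ξ • (1 : Matrix (Fin n) (Fin n) ℝ))
        (P + ξ • (1 : Matrix (Fin n) (Fin n) ℝ)) 0).mulVec v ≤ 0)
    ↔ (P = -ξ • (1 : Matrix (Fin n) (Fin n) ℝ) ∧
       ∀ v : Fin n → ℝ,
         v ⬝ᵥ (Aᵀ + A + ε • (1 : Matrix (Fin n) (Fin n) ℝ)).mulVec v ≤ 0) := by
  set M := Aᵀ * P + P * A + ε • P with hM
  set B := P + ξ • (1 : Matrix (Fin n) (Fin n) ℝ) with hB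
  have hPsymm : Pᵀ = P := hP.isHermitian.eq
  have hBsymm : Bᵀ = B := by
    rw [hB, transpose_add, transpose_smul, transpose_one, hPsymm]
  have hq : ∀ x y : Fin n → ℝ,
      Sum.elim x y ⬝ᵥ (Matrix.fromBlocks M B B 0).mulVec (Sum.elim x y)
        = x ⬝ᵥ M.mulVec x + x ⬝ᵥ B.mulVec y + y ⬝ᵥ B.mulVec x := by
    intro x y
    rw [fromBlocks_mulVec, sumElim_dotProduct_sumElim, dotProduct_add, dotProduct_add,
      zero_mulVec, dotProduct_zero]
    simp only [Sum.elim_comp_inl, Sum.elim_comp_inr]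
    ring
  have hswap : ∀ x y : Fin n → ℝ, y ⬝ᵥ B.mulVec x = x ⬝ᵥ B.mulVec y := by
    intro x y
    rw [dotProduct_mulVec, ← mulVec_transpose, hBsymm, dotProduct_comm]
  have hnξ : 0 < -ξ := by linarith
  constructor
  · intro h
    have hBxy : ∀ x y : Fin n → ℝ, x ⬝ᵥ B.mulVec y = 0 := by
      intro x y
      by_contra hne
      set q := x ⬝ᵥ M.mulVec x with hqq
      set d := x ⬝ᵥ B.mulVec y with hd
      have key : ∀ t : ℝ, q + 2 * (t * d) ≤ 0 := by
        intro t
        have h1 := h (Sum.elim x (t • y))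
        rw [hq, hswap x (t • y)] at h1
        simp only [mulVec_smul, dotProduct_smul, smul_eq_mul] at h1
        linarith
      have h2 := key ((-q + 1) / (2 * d))
      have h3 : 2 * ((-q + 1) / (2 * d) * d) = -q + 1 := by
        field_simp
      rw [h3] at h2
      linarith
    have hBv : ∀ y : Fin n → ℝ, B.mulVec y = 0 := by
      intro y
      exact (dotProduct_self_eq_zero).mp (hBxy (B.mulVec y) y)
    have hB0 : B = 0 := by
      ext i j
      have := congrFun (hBv (Pi.single j 1)) i
      simpa [mulVec_single] using this
    have hPeq : P = -ξ • (1 : Matrix (Fin n) (Fin n) ℝ) := by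
      have h4 : P + ξ • (1 : Matrix (Fin n) (Fin n) ℝ) = 0 := hB0
      rw [neg_smul]
      linear_combination (norm := abel) h4
    refine ⟨hPeq, ?_⟩
    intro v
    have hMx := h (Sum.elim v 0)
    rw [hq] at hMx
    simp only [mulVec_zero, dotProduct_zero, zero_dotProduct, add_zero] at hMx
    have hMeq : M = (-ξ) • (Aᵀ + A + ε • (1 : Matrix (Fin n) (Fin n) ℝ)) := by
      rw [hM, hPeq, Matrix.mul_smul, Matrix.mul_one, Matrix.smul_mul, Matrix.one_mul]
      module
    rw [hMeq, smul_mulVec, dotProduct_smul, smul_eq_mul] at hMx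
    nlinarith [hMx]
  · rintro ⟨hPeq, hN⟩
    intro v
    have hB0 : B = 0 := by
      rw [hB, hPeq, neg_smul]; abel
    have hMeq : M = (-ξ) • (Aᵀ + A + ε • (1 : Matrix (Fin n) (Fin n) ℝ)) := by
      rw [hM, hPeq, Matrix.mul_smul, Matrix.mul_one, Matrix.smul_mul, Matrix.one_mul]
      module
    have hv : v = Sum.elim (v ∘ Sum.inl) (v ∘ Sum.inr) := by
      ext (i | i) <;> rfl
    rw [hv, hq, hB0]
    simp only [zero_mulVec, dotProduct_zero, add_zero]
    rw [hMeq, smul_mulVec, dotProduct_smul, smul_eq_mul]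
    nlinarith [hN (v ∘ Sum.inl)]
end

section
/- There exist a symmetric positive definite n×n matrix P, a real scalar ξ, and a q×p matrix K such that the block matrix [[(A+BKC)ᵀP + P(A+BKC) + εP, P + ξI],[P + ξI, 0]] is negative semidefinite, if and only if there exists a q×p matrix K such that (A+BKC) + (A+BKC)ᵀ + εI is negative semidefinite. -/
/-!
A symmetric block matrix `[[T, N], [N, 0]]` is negative semidefinite exactly when `N = 0` and
`T` is negative semidefinite, since with `N ≠ 0` its quadratic form is affine and nonconstant
along some line. So `P + ξ I = 0`, i.e. `P = c I` with `c = -ξ > 0`, and the remaining block is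
`c ((A + BKC) + (A + BKC)ᵀ + ε I)`. Conversely take `P = I`, `ξ = -1`.
-/

open Matrix

section BlockQuadraticForm

variable {m n R : Type*} [Fintype m] [Fintype n]

theorem sumElim_dotProduct_fromBlocks_zero_mulVec [Semiring R] (T : Matrix m m R)
    (M : Matrix m n R) (N : Matrix n m R) (x : m → R) (y : n → R) :
    Sum.elim x y ⬝ᵥ fromBlocks T M N 0 *ᵥ Sum.elim x y
      = x ⬝ᵥ T *ᵥ x + x ⬝ᵥ M *ᵥ y + y ⬝ᵥ N *ᵥ x := by
  rw [fromBlocks_mulVec, sumElim_dotProduct_sumElim, Sum.elim_comp_inl, Sum.elim_comp_inr,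
    zero_mulVec, add_zero, dotProduct_add, add_assoc]

theorem eq_zero_of_forall_add_mul_nonpos {R : Type*} [Field R] [LinearOrder R]
    [IsStrictOrderedRing R] {a c : R} (h : ∀ t, a + t * c ≤ 0) : c = 0 := by
  by_contra hc
  have := h ((1 - a) / c)
  rw [div_mul_cancel₀ _ hc] at this
  linarith

variable [Field R] [LinearOrder R] [IsStrictOrderedRing R]

theorem fromBlocks_zero₂₂_quadForm_nonpos_iff {T N : Matrix n n R} (hN : N.IsSymm) :
    (∀ v, v ⬝ᵥ fromBlocks T N N 0 *ᵥ v ≤ 0) ↔ N = 0 ∧ ∀ x, x ⬝ᵥ T *ᵥ x ≤ 0 := by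
  have hsymm : ∀ x y : n → R, y ⬝ᵥ N *ᵥ x = x ⬝ᵥ N *ᵥ y := fun x y => by
    rw [dotProduct_mulVec, ← mulVec_transpose, hN.eq, dotProduct_comm]
  constructor
  · intro h
    classical
    have hN0 : ∀ x y : n → R, x ⬝ᵥ N *ᵥ y = 0 := fun x y =>
      eq_zero_of_forall_add_mul_nonpos (a := x ⬝ᵥ T *ᵥ x) fun t => by
        have := h (Sum.elim x ((t / 2) • y))
        rw [sumElim_dotProduct_fromBlocks_zero_mulVec, hsymm x, mulVec_smul, dotProduct_smul,
          smul_eq_mul] at this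
        linarith
    refine ⟨ext fun i j => ?_, fun x => ?_⟩
    · simpa [single_one_dotProduct, mulVec_single_one] using hN0 (Pi.single i 1) (Pi.single j 1)
    · simpa [sumElim_dotProduct_fromBlocks_zero_mulVec] using h (Sum.elim x 0)
  · rintro ⟨rfl, hT⟩ v
    rw [← Sum.elim_comp_inl_inr v, sumElim_dotProduct_fromBlocks_zero_mulVec]
    simpa using hT (v ∘ Sum.inl)

end BlockQuadraticForm

theorem quadForm_nonpos_of_posDef_smul_one {n : Type*} [Fintype n] [DecidableEq n] {c : ℝ}
    (hc : (c • 1 : Matrix n n ℝ).PosDef) {M : Matrix n n ℝ}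
    (h : ∀ v, v ⬝ᵥ (c • M) *ᵥ v ≤ 0) (v : n → ℝ) : v ⬝ᵥ M *ᵥ v ≤ 0 := by
  obtain rfl | hv := eq_or_ne v 0
  · simp
  have hc_pos : 0 < c := by
    have := hc.dotProduct_mulVec_pos hv
    rw [star_trivial, smul_mulVec, one_mulVec, dotProduct_smul, smul_eq_mul] at this
    exact pos_of_mul_pos_left this (dotProduct_self_star_nonneg v)
  have := h v
  rw [smul_mulVec, dotProduct_smul, smul_eq_mul] at this
  exact nonpos_of_mul_nonpos_right this hc_pos

theorem lyapunov_smul_one {n R : Type*} [Fintype n] [DecidableEq n] [CommRing R]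
    (S : Matrix n n R) (c ε : R) :
    Sᵀ * (c • 1) + (c • 1) * S + ε • (c • 1) = c • (S + Sᵀ + ε • 1) := by
  rw [Matrix.mul_smul, Matrix.smul_mul, mul_one, one_mul, smul_comm ε c]
  module

theorem sof_bmi_iff_lmi_general (n q p : ℕ)
    (A : Matrix (Fin n) (Fin n) ℝ) (B : Matrix (Fin n) (Fin q) ℝ)
    (C : Matrix (Fin p) (Fin n) ℝ) (ε : ℝ) :
    (∃ (P : Matrix (Fin n) (Fin n) ℝ) (ξ : ℝ) (K : Matrix (Fin q) (Fin p) ℝ),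
      P.PosDef ∧
      ∀ v : (Fin n ⊕ Fin n) → ℝ,
        v ⬝ᵥ (Matrix.fromBlocks
          ((A + B * K * C)ᵀ * P + P * (A + B * K * C) + ε • P)
          (P + ξ • (1 : Matrix (Fin n) (Fin n) ℝ))
          (P + ξ • (1 : Matrix (Fin n) (Fin n) ℝ)) 0).mulVec v ≤ 0)
    ↔ (∃ K : Matrix (Fin q) (Fin p) ℝ,
        ∀ v : Fin n → ℝ,
          v ⬝ᵥ ((A + B * K * C) + (A + B * K * C)ᵀ
            + ε • (1 : Matrix (Fin n) (Fin n) ℝ)).mulVec v ≤ 0) := by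
  constructor
  · rintro ⟨P, ξ, K, hP, h⟩
    have hsymm : (P + ξ • (1 : Matrix (Fin n) (Fin n) ℝ)).IsSymm :=
      IsSymm.add (A := P) hP.1 (isSymm_one.smul ξ)
    obtain ⟨hN, hT⟩ := (fromBlocks_zero₂₂_quadForm_nonpos_iff hsymm).1 h
    obtain rfl : P = (-ξ) • 1 := by rw [neg_smul]; exact eq_neg_of_add_eq_zero_left hN
    rw [lyapunov_smul_one] at hT
    exact ⟨K, quadForm_nonpos_of_posDef_smul_one hP hT⟩
  · rintro ⟨K, h⟩
    refine ⟨1, -1, K, PosDef.one, (fromBlocks_zero₂₂_quadForm_nonpos_iff ?_).2 ⟨?_, ?_⟩⟩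
    · simp
    · simp
    · rw [← one_smul ℝ (1 : Matrix (Fin n) (Fin n) ℝ), lyapunov_smul_one, one_smul]
      exact h

theorem sof_bmi_iff_lmi (n q p : ℕ)
    (A : Matrix (Fin n) (Fin n) ℝ) (B : Matrix (Fin n) (Fin q) ℝ)
    (C : Matrix (Fin p) (Fin n) ℝ) (ε : ℝ) (hε : 0 < ε) :
    (∃ (P : Matrix (Fin n) (Fin n) ℝ) (ξ : ℝ) (K : Matrix (Fin q) (Fin p) ℝ),
      P.PosDef ∧
      ∀ v : (Fin n ⊕ Fin n) → ℝ,
        v ⬝ᵥ (Matrix.fromBlocks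
          ((A + B * K * C)ᵀ * P + P * (A + B * K * C) + ε • P)
          (P + ξ • (1 : Matrix (Fin n) (Fin n) ℝ))
          (P + ξ • (1 : Matrix (Fin n) (Fin n) ℝ)) 0).mulVec v ≤ 0)
    ↔ (∃ K : Matrix (Fin q) (Fin p) ℝ,
        ∀ v : Fin n → ℝ,
          v ⬝ᵥ ((A + B * K * C) + (A + B * K * C)ᵀ
            + ε • (1 : Matrix (Fin n) (Fin n) ℝ)).mulVec v ≤ 0) :=
  sof_bmi_iff_lmi_general n q p A B C ε
end

section
/- Suppose there exists ε > 0 and a q×p matrix K such that (A+BKC) + (A+BKC)ᵀ + εI is negative semidefinite. Then for every nonzero u ∈ ℝⁿ with Bᵀu = 0, uᵀ(A + Aᵀ)u < 0, and for every nonzero v ∈ ℝⁿ with Cv = 0, vᵀ(A + Aᵀ)v < 0. -/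
open Matrix

theorem nullspace_conditions (n q p : ℕ)
    (A : Matrix (Fin n) (Fin n) ℝ) (B : Matrix (Fin n) (Fin q) ℝ)
    (C : Matrix (Fin p) (Fin n) ℝ)
    (h : ∃ (ε : ℝ) (K : Matrix (Fin q) (Fin p) ℝ), 0 < ε ∧
      ∀ w : Fin n → ℝ,
        w ⬝ᵥ ((A + B * K * C) + (A + B * K * C)ᵀ
          + ε • (1 : Matrix (Fin n) (Fin n) ℝ)).mulVec w ≤ 0) :
    (∀ u : Fin n → ℝ, u ≠ 0 → Bᵀ.mulVec u = 0 → u ⬝ᵥ (A + Aᵀ).mulVec u < 0) ∧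
    (∀ v : Fin n → ℝ, v ≠ 0 → C.mulVec v = 0 → v ⬝ᵥ (A + Aᵀ).mulVec v < 0) := by
  obtain ⟨ε, K, hε, hw⟩ := h
  have key : ∀ w : Fin n → ℝ, w ≠ 0 →
      w ⬝ᵥ (B * K * C).mulVec w = 0 → w ⬝ᵥ (B * K * C)ᵀ.mulVec w = 0 →
      w ⬝ᵥ (A + Aᵀ).mulVec w < 0 := by
    intro w hw0 h1 h2
    have hle := hw w
    have hexp : w ⬝ᵥ ((A + B * K * C) + (A + B * K * C)ᵀ
        + ε • (1 : Matrix (Fin n) (Fin n) ℝ)).mulVec w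
        = w ⬝ᵥ (A + Aᵀ).mulVec w + (w ⬝ᵥ (B * K * C).mulVec w
          + w ⬝ᵥ (B * K * C)ᵀ.mulVec w) + ε * (w ⬝ᵥ w) := by
      simp [Matrix.add_mulVec, Matrix.transpose_add, Matrix.smul_mulVec,
        Matrix.one_mulVec, dotProduct_add, dotProduct_smul, smul_eq_mul]
      ring
    have hdp : 0 < w ⬝ᵥ w := by
      have hnn : 0 ≤ w ⬝ᵥ w := Finset.sum_nonneg fun i _ => mul_self_nonneg _
      rcases hnn.lt_or_eq with h' | h'
      · exact h'
      · exact absurd ((dotProduct_self_eq_zero).mp h'.symm) hw0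
    rw [hexp, h1, h2] at hle
    nlinarith
  constructor
  · intro u hu0 hB
    have hb : vecMul u B = 0 := by rw [← Matrix.mulVec_transpose]; exact hB
    have h1 : u ⬝ᵥ (B * K * C).mulVec u = 0 := by
      rw [dotProduct_mulVec, ← Matrix.vecMul_vecMul, ← Matrix.vecMul_vecMul, hb]
      simp
    have h2 : u ⬝ᵥ (B * K * C)ᵀ.mulVec u = 0 := by
      rw [Matrix.mulVec_transpose, dotProduct_comm, ← dotProduct_mulVec]
      exact h1
    exact key u hu0 h1 h2
  · intro v hv0 hC
    have h1 : v ⬝ᵥ (B * K * C).mulVec v = 0 := by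
      rw [← Matrix.mulVec_mulVec, hC]
      simp
    have h2 : v ⬝ᵥ (B * K * C)ᵀ.mulVec v = 0 := by
      rw [Matrix.mulVec_transpose, dotProduct_comm, ← dotProduct_mulVec]
      exact h1
    exact key v hv0 h1 h2
end
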